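/- Assume in addition 2β < min(ε, δ/2). Then for each s ∈ {1, …, m}, the set T_s = θ({q ∈ Σ(P) : q_0 = p_s}) is a closed rectangle in M of diameter at most 2β. -/

import Mathlib

open Set Filter Metric Topology

variable {M : Type*} [MetricSpace M] [CompactSpace M]

/-- `f` is expansive with expansivity constant `ρ`: if two orbits stay `ρ`-close for all
integer times, the points coincide. -/
def IsExpansiveWith (f : Equiv.Perm M) (ρ : ℝ) : Prop :=
  ∀ x y : M, (∀ n : ℤ, dist ((f ^ n) x) ((f ^ n) y) ≤ ρ) → x = y

/-- The stable set `W^s(x)`. -/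
def stableSet (f : Equiv.Perm M) (x : M) : Set M :=
  {y : M | Tendsto (fun n : ℤ => dist ((f ^ n) x) ((f ^ n) y)) atTop (𝓝 0)}

/-- The unstable set `W^u(x)`. -/
def unstableSet (f : Equiv.Perm M) (x : M) : Set M :=
  {y : M | Tendsto (fun n : ℤ => dist ((f ^ n) x) ((f ^ n) y)) atBot (𝓝 0)}

/-- The `ε`-stable set `W^s_ε(x)`. -/
def epsStable (f : Equiv.Perm M) (ε : ℝ) (x : M) : Set M :=
  {y : M | ∀ n : ℤ, 0 ≤ n → dist ((f ^ n) x) ((f ^ n) y) ≤ ε}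

/-- The `ε`-unstable set `W^u_ε(x)`. -/
def epsUnstable (f : Equiv.Perm M) (ε : ℝ) (x : M) : Set M :=
  {y : M | ∀ n : ℤ, n ≤ 0 → dist ((f ^ n) x) ((f ^ n) y) ≤ ε}

/-- Shadowing property: every `δ`-pseudo-orbit is `ε`-shadowed by a true orbit. -/
def HasShadowing (f : Equiv.Perm M) : Prop :=
  ∀ ε : ℝ, 0 < ε → ∃ δ : ℝ, 0 < δ ∧ ∀ y : ℤ → M,
    (∀ n : ℤ, dist (f (y n)) (y (n + 1)) < δ) →
      ∃ z : M, ∀ n : ℤ, dist ((f ^ n) z) (y n) ≤ ε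

/-- A rectangle: a nonempty set of diameter `< δ` closed under the bracket operation. -/
def IsRectangle (δ : ℝ) (br : M → M → M) (R : Set M) : Prop :=
  R.Nonempty ∧ Metric.diam R < δ ∧ ∀ x ∈ R, ∀ y ∈ R, br x y ∈ R

/-- Stable border `∂^s R`: points of `R` that are not interior points of
`W^u(x,R) = W^u_ε(x) ∩ R` in the subspace topology of `W^u_ε(x)`. -/
def stableBorder (f : Equiv.Perm M) (ε : ℝ) (R : Set M) : Set M :=
  {x : M | x ∈ R ∧ ¬ ∃ U : Set M, IsOpen U ∧ x ∈ U ∧ U ∩ epsUnstable f ε x ⊆ R}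

/-- Unstable border `∂^u R`: points of `R` that are not interior points of
`W^s(x,R) = W^s_ε(x) ∩ R` in the subspace topology of `W^s_ε(x)`. -/
def unstableBorder (f : Equiv.Perm M) (ε : ℝ) (R : Set M) : Set M :=
  {x : M | x ∈ R ∧ ¬ ∃ U : Set M, IsOpen U ∧ x ∈ U ∧ U ∩ epsStable f ε x ⊆ R}

/-- A Markov partition: a finite family of proper rectangles covering `M`, with pairwise
disjoint interiors, satisfying the Markov inclusions for the invariant fibers. -/
def IsMarkovPartition (f : Equiv.Perm M) (ε δ : ℝ) (br : M → M → M) {m : ℕ}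
    (R : Fin m → Set M) : Prop :=
  (∀ i, IsRectangle δ br (R i)) ∧
  (∀ i, R i = closure (interior (R i))) ∧
  (⋃ i, R i) = Set.univ ∧
  (∀ i j, i ≠ j → interior (R i) ∩ interior (R j) = ∅) ∧
  ∀ i j, ∀ x ∈ interior (R i) ∩ ⇑f ⁻¹' interior (R j),
    ⇑f '' (epsStable f ε x ∩ R i) ⊆ epsStable f ε (f x) ∩ R j ∧
    epsUnstable f ε (f x) ∩ R j ⊆ ⇑f '' (epsUnstable f ε x ∩ R i)

/-!
Every point of `T_s` is the shadow of an `α`-pseudo-orbit through `p_s`, so it lies within `β`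
of `p_s`. Splicing the code of `y` (in positive times) with the code of `z` (in negative times)
at their common symbol `p_s` gives another admissible code, whose shadow stays `2β ≤ ε` close to
`y` forward and to `z` backward; hence it is `[y, z]`. Closedness comes from compactness of the
symbol space together with uniqueness of shadows (expansivity).
-/

theorem Equiv.Perm.continuous_zpow {X : Type*} [TopologicalSpace X] {f : Equiv.Perm X}
    (hf : Continuous f) (hf' : Continuous f.symm) (n : ℤ) : Continuous ⇑(f ^ n) := by
  induction n using Int.induction_on with
  | zero => exact continuous_id
  | succ k ih => rw [zpow_add_one, Equiv.Perm.coe_mul]; exact ih.comp hf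
  | pred k ih => rw [zpow_sub_one, Equiv.Perm.coe_mul]; exact ih.comp hf'

section Symbolic

variable {X : Type*}

def splice (q q' : ℤ → X) : ℤ → X := fun n => if 0 ≤ n then q n else q' n

theorem splice_eq_right_of_nonpos {q q' : ℤ → X} (h : q 0 = q' 0) {n : ℤ} (hn : n ≤ 0) :
    splice q q' n = q' n := by
  rcases hn.lt_or_eq with hn | rfl
  · simp [splice, show ¬ 0 ≤ n by omega]
  · simp [splice, h]

variable [MetricSpace X] {ι : Type*}

/-- The cylinder `{q ∈ Σ(P) : q₀ = x}` of `α`-pseudo-orbits with values in `P = range p`. -/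
def symbolCylinder (f : Equiv.Perm X) (α : ℝ) (p : ι → X) (x : X) : Set (ℤ → X) :=
  {q | (∀ n : ℤ, ∃ i : ι, q n = p i) ∧ (∀ n : ℤ, dist (f (q n)) (q (n + 1)) < α) ∧ q 0 = x}

variable {f : Equiv.Perm X} {α β : ℝ} {p : ι → X} {x : X} {θ : (ℤ → X) → X}

theorem dist_le_of_mem_image_symbolCylinder
    (hθ : ∀ q ∈ symbolCylinder f α p x, ∀ n : ℤ, dist ((f ^ n) (θ q)) (q n) ≤ β) {y : X}
    (hy : y ∈ θ '' symbolCylinder f α p x) : dist y x ≤ β := by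
  obtain ⟨q, hq, rfl⟩ := hy
  simpa [hq.2.2] using hθ q hq 0

theorem diam_image_symbolCylinder_le (hβ : 0 ≤ β)
    (hθ : ∀ q ∈ symbolCylinder f α p x, ∀ n : ℤ, dist ((f ^ n) (θ q)) (q n) ≤ β) :
    diam (θ '' symbolCylinder f α p x) ≤ 2 * β :=
  calc diam (θ '' symbolCylinder f α p x) ≤ diam (closedBall x β) :=
        diam_mono (fun _ hy => dist_le_of_mem_image_symbolCylinder hθ hy) isBounded_closedBall
    _ ≤ 2 * β := diam_closedBall hβ

/-- Round the orbit of `p s` to `γ`-close points of `P`: by the choice of `γ`, consecutive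
roundings are `α/2 + γ < α` apart. -/
theorem symbolCylinder_nonempty {γ : ℝ} (hγ0 : 0 < γ) (hγα : γ < α / 2)
    (hγ : ∀ x y : X, dist x y < γ → dist (f x) (f y) < α / 2)
    (hP : ∀ x : X, ∃ i : ι, dist x (p i) < γ) (s : ι) :
    (symbolCylinder f α p (p s)).Nonempty := by
  choose a ha using fun n : ℤ => hP ((f ^ n) (p s))
  set q : ℤ → X := fun n => if n = 0 then p s else p (a n)
  have hq_near : ∀ n, dist ((f ^ n) (p s)) (q n) < γ := by
    intro n
    by_cases hn : n = 0
    · simpa [q, hn] using hγ0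
    · simpa [q, hn] using ha n
  refine ⟨q, fun n => ?_, fun n => ?_, by simp [q]⟩
  · by_cases hn : n = 0
    · exact ⟨s, by simp [q, hn]⟩
    · exact ⟨a n, by simp [q, hn]⟩
  · have hstep : f ((f ^ n) (p s)) = (f ^ (n + 1)) (p s) := by
      rw [add_comm, zpow_one_add, Equiv.Perm.mul_apply]
    calc dist (f (q n)) (q (n + 1))
        ≤ dist (f (q n)) (f ((f ^ n) (p s))) + dist (f ((f ^ n) (p s))) (q (n + 1)) :=
          dist_triangle _ _ _
      _ < α / 2 + γ :=
          add_lt_add (dist_comm (f (q n)) _ ▸ hγ _ _ (hq_near n)) (hstep ▸ hq_near (n + 1))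
      _ < α := by linarith

theorem splice_mem_symbolCylinder {q q' : ℤ → X} (hq : q ∈ symbolCylinder f α p x)
    (hq' : q' ∈ symbolCylinder f α p x) : splice q q' ∈ symbolCylinder f α p x := by
  obtain ⟨hq₁, hq₂, hq₃⟩ := hq
  obtain ⟨hq₁', hq₂', hq₃'⟩ := hq'
  refine ⟨fun n => ?_, fun n => ?_, by simp [splice, hq₃]⟩
  · unfold splice; split_ifs
    exacts [hq₁ n, hq₁' n]
  · rcases lt_trichotomy n (-1) with hn | rfl | hn
    · simpa [splice, show ¬ 0 ≤ n by omega, show ¬ 0 ≤ n + 1 by omega] using hq₂' n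
    · simpa [splice, hq₃, ← hq₃'] using hq₂' (-1)
    · simpa [splice, show 0 ≤ n by omega, show 0 ≤ n + 1 by omega] using hq₂ n

theorem bracket_mem_image_symbolCylinder {ε δ : ℝ} {br : X → X → X}
    (hbr : ∀ x y : X, dist x y < δ → epsStable f ε x ∩ epsUnstable f ε y = {br x y})
    (hβε : 2 * β ≤ ε) (hβδ : 2 * β < δ)
    (hθ : ∀ q ∈ symbolCylinder f α p x, ∀ n : ℤ, dist ((f ^ n) (θ q)) (q n) ≤ β)
    {y z : X} (hy : y ∈ θ '' symbolCylinder f α p x) (hz : z ∈ θ '' symbolCylinder f α p x) :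
    br y z ∈ θ '' symbolCylinder f α p x := by
  have hyz : dist y z < δ :=
    (dist_triangle_right y z x).trans_lt <| by
      linarith [dist_le_of_mem_image_symbolCylinder hθ hy,
        dist_le_of_mem_image_symbolCylinder hθ hz]
  obtain ⟨q, hq, rfl⟩ := hy
  obtain ⟨q', hq', rfl⟩ := hz
  have hr := splice_mem_symbolCylinder hq hq'
  have hmem : θ (splice q q') ∈ epsStable f ε (θ q) ∩ epsUnstable f ε (θ q') := by
    constructor
    · intro n hn
      have h := hθ _ hr n
      rw [splice, if_pos hn] at h
      exact (dist_triangle_right _ _ (q n)).trans (by linarith [hθ q hq n])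
    · intro n hn
      have h := hθ _ hr n
      rw [splice_eq_right_of_nonpos (hq.2.2.trans hq'.2.2.symm) hn] at h
      exact (dist_triangle_right _ _ (q' n)).trans (by linarith [hθ q' hq' n])
  rw [hbr _ _ hyz, mem_singleton_iff] at hmem
  exact ⟨_, hr, hmem⟩

theorem IsExpansiveWith.eq_of_shadow {ρ : ℝ} (hexp : IsExpansiveWith f ρ) (hβρ : 2 * β ≤ ρ)
    {q : ℤ → X} {y z : X} (hy : ∀ n : ℤ, dist ((f ^ n) y) (q n) ≤ β)
    (hz : ∀ n : ℤ, dist ((f ^ n) z) (q n) ≤ β) : y = z :=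
  hexp y z fun n => (dist_triangle_right _ _ (q n)).trans (by linarith [hy n, hz n])

theorem isClosed_setOf_comp_mem_symbolCylinder [TopologicalSpace ι] [DiscreteTopology ι] :
    IsClosed {a : ℤ → ι | p ∘ a ∈ symbolCylinder f α p x} := by
  have hstep : ∀ n : ℤ, IsClosed {a : ℤ → ι | dist (f (p (a n))) (p (a (n + 1))) < α} :=
    fun n => (isClosed_discrete {ij : ι × ι | dist (f (p ij.1)) (p ij.2) < α}).preimage
      (f := fun a : ℤ → ι => (a n, a (n + 1))) (by fun_prop)
  have hzero : IsClosed {a : ℤ → ι | p (a 0) = x} :=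
    (isClosed_discrete {i | p i = x}).preimage (f := fun a : ℤ → ι => a 0) (continuous_apply 0)
  convert (isClosed_iInter hstep).inter hzero using 1
  ext a
  simp [symbolCylinder]

/-- By expansivity, the image is the projection of the closed set of pairs (point, code) in which
the point `β`-shadows the code, and the code space `ι^ℤ` is compact. -/
theorem isClosed_image_symbolCylinder [TopologicalSpace ι] [DiscreteTopology ι] [Finite ι]
    (hf : Continuous f) (hf' : Continuous f.symm) {ρ : ℝ} (hexp : IsExpansiveWith f ρ)
    (hβρ : 2 * β ≤ ρ)
    (hθ : ∀ q ∈ symbolCylinder f α p x, ∀ n : ℤ, dist ((f ^ n) (θ q)) (q n) ≤ β) :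
    IsClosed (θ '' symbolCylinder f α p x) := by
  set Z := {w : X × (ℤ → ι) | p ∘ w.2 ∈ symbolCylinder f α p x ∧
    ∀ n : ℤ, dist ((f ^ n) w.1) (p (w.2 n)) ≤ β}
  have hZ : IsClosed Z := by
    refine (isClosed_setOf_comp_mem_symbolCylinder.preimage continuous_snd).inter ?_
    show IsClosed {w : X × (ℤ → ι) | ∀ n : ℤ, dist ((f ^ n) w.1) (p (w.2 n)) ≤ β}
    rw [ofPred_forall]
    refine isClosed_iInter fun n => isClosed_le ?_ continuous_const
    have hfn := Equiv.Perm.continuous_zpow hf hf' n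
    have hp : Continuous p := continuous_of_discreteTopology
    fun_prop
  suffices θ '' symbolCylinder f α p x = Prod.fst '' Z from
    this ▸ isClosedMap_fst_of_compactSpace _ hZ
  ext y
  constructor
  · rintro ⟨q, hq, rfl⟩
    choose a ha using hq.1
    have hqa : p ∘ a = q := funext fun n => (ha n).symm
    exact ⟨(θ q, a), ⟨hqa ▸ hq, fun n => ha n ▸ hθ q hq n⟩, rfl⟩
  · rintro ⟨⟨y, a⟩, ⟨ha, hy⟩, rfl⟩
    exact ⟨p ∘ a, ha, hexp.eq_of_shadow hβρ (hθ _ ha) hy⟩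

end Symbolic

theorem stmt_15_general (f : Equiv.Perm M) (hf : Continuous ⇑f) (hf' : Continuous ⇑f.symm)
    (ρ ε δ : ℝ) (hexp : IsExpansiveWith f ρ)
    (br : M → M → M)
    (hbr : ∀ x y : M, dist x y < δ → epsStable f ε x ∩ epsUnstable f ε y = {br x y})
    (β α γ : ℝ) (hβ0 : 0 < β) (hβ : β < ρ / 2)
    (hγ0 : 0 < γ) (hγα : γ < α / 2)
    (hγ : ∀ x y : M, dist x y < γ → dist (f x) (f y) < α / 2)
    {m : ℕ} (p : Fin m → M) (hP : ∀ x : M, ∃ i : Fin m, dist x (p i) < γ)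
    (θ : (ℤ → M) → M)
    (hθ : ∀ q : ℤ → M, (∀ n : ℤ, ∃ i : Fin m, q n = p i) →
      (∀ n : ℤ, dist (f (q n)) (q (n + 1)) < α) →
      ∀ n : ℤ, dist ((f ^ n) (θ q)) (q n) ≤ β)
    (h2β : 2 * β < min ε (δ / 2)) (s : Fin m) :
    ∀ T : Set M,
      T = θ '' {q : ℤ → M | (∀ n : ℤ, ∃ i : Fin m, q n = p i) ∧
        (∀ n : ℤ, dist (f (q n)) (q (n + 1)) < α) ∧ q 0 = p s} →
      IsClosed T ∧ IsRectangle δ br T ∧ Metric.diam T ≤ 2 * β := by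
  rintro T rfl
  have hθs : ∀ q ∈ symbolCylinder f α p (p s), ∀ n, dist ((f ^ n) (θ q)) (q n) ≤ β :=
    fun q hq => hθ q hq.1 hq.2.1
  have hβε : 2 * β ≤ ε := by linarith [min_le_left ε (δ / 2)]
  have hβδ : 2 * β < δ := by linarith [min_le_right ε (δ / 2)]
  have hdiam := diam_image_symbolCylinder_le hβ0.le hθs
  refine ⟨isClosed_image_symbolCylinder hf hf' hexp (by linarith) hθs,
    ⟨(symbolCylinder_nonempty hγ0 hγα hγ hP s).image θ, hdiam.trans_lt hβδ,
      fun y hy z hz => bracket_mem_image_symbolCylinder hbr hβε hβδ hθs hy hz⟩, hdiam⟩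

/-- If moreover `2β < min(ε, δ/2)`, then for each `s`, the set
`T_s = θ({q ∈ Σ(P) : q_0 = p_s})` is a closed rectangle of diameter at most `2β`. -/
theorem stmt_15 (f : Equiv.Perm M) (hf : Continuous ⇑f) (hf' : Continuous ⇑f.symm)
    (ρ ε δ : ℝ) (hρ : 0 < ρ) (hexp : IsExpansiveWith f ρ)
    (hε0 : 0 < ε) (hε : ε ≤ ρ / 4) (hδ : 0 < δ) (br : M → M → M)
    (hbr : ∀ x y : M, dist x y < δ → epsStable f ε x ∩ epsUnstable f ε y = {br x y})
    (β α γ : ℝ) (hβ0 : 0 < β) (hβ : β < ρ / 2) (hα0 : 0 < α)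
    (hshad : ∀ y : ℤ → M, (∀ n : ℤ, dist (f (y n)) (y (n + 1)) < α) →
      ∃ z : M, ∀ n : ℤ, dist ((f ^ n) z) (y n) ≤ β)
    (hγ0 : 0 < γ) (hγβ : γ < β) (hγα : γ < α / 2)
    (hγ : ∀ x y : M, dist x y < γ → dist (f x) (f y) < α / 2)
    {m : ℕ} (p : Fin m → M) (hP : ∀ x : M, ∃ i : Fin m, dist x (p i) < γ)
    (θ : (ℤ → M) → M)
    (hθ : ∀ q : ℤ → M, (∀ n : ℤ, ∃ i : Fin m, q n = p i) →
      (∀ n : ℤ, dist (f (q n)) (q (n + 1)) < α) →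
      ∀ n : ℤ, dist ((f ^ n) (θ q)) (q n) ≤ β)
    (h2β : 2 * β < min ε (δ / 2)) (s : Fin m) :
    ∀ T : Set M,
      T = θ '' {q : ℤ → M | (∀ n : ℤ, ∃ i : Fin m, q n = p i) ∧
        (∀ n : ℤ, dist (f (q n)) (q (n + 1)) < α) ∧ q 0 = p s} →
      IsClosed T ∧ IsRectangle δ br T ∧ Metric.diam T ≤ 2 * β :=
  stmt_15_general f hf hf' ρ ε δ hexp br hbr β α γ hβ0 hβ hγ0 hγα hγ p hP θ hθ h2β s
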